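/- Let A, B ∈ ℝ³ with A ≠ B, and let φ : ℝ³ → [0,∞) be a measurable function with ∫ φ = 1 and φ(z) = 0 whenever |z| > |A − B|/2. Then the probability measure on ℝ³ × ℝ³ with density p₂(x,y) = ½(φ(x−A)φ(y−B) + φ(x−B)φ(y−A)) (with respect to Lebesgue measure) is not 3-density representable. -/
import Mathlib

open MeasureTheory ENNReal

noncomputable section

abbrev R3 : Type := EuclideanSpace ℝ (Fin 3)

def IsSymmetricMeasure {N : ℕ} (p : Measure (Fin N → R3)) : Prop :=
  ∀ σ : Equiv.Perm (Fin N), p.map (fun x => x ∘ σ) = p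

def pairMarginal {N : ℕ} (hN : 2 ≤ N) (p : Measure (Fin N → R3)) : Measure (R3 × R3) :=
  p.map (fun x => (x ⟨0, by omega⟩, x ⟨1, by omega⟩))

def NDensityRep (N : ℕ) (hN : 2 ≤ N) (p₂ : Measure (R3 × R3)) : Prop :=
  ∃ pN : Measure (Fin N → R3), IsProbabilityMeasure pN ∧ IsSymmetricMeasure pN ∧
    pairMarginal hN pN = p₂

lemma exists_perm_01 (i j : Fin 3) (h : i ≠ j) :
    ∃ σ : Equiv.Perm (Fin 3), σ 0 = i ∧ σ 1 = j := by
  set τ := Equiv.swap (0 : Fin 3) i with hτ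
  have hτ0 : τ 0 = i := Equiv.swap_apply_left 0 i
  set j' := τ.symm j with hj'
  have hj'0 : j' ≠ (0 : Fin 3) := by
    intro hc
    apply h
    have : τ j' = j := Equiv.apply_symm_apply τ j
    rw [hc, hτ0] at this
    exact this.symm ▸ rfl
  refine ⟨(Equiv.swap (1 : Fin 3) j').trans τ, ?_, ?_⟩
  · simp [Equiv.trans_apply, Equiv.swap_apply_of_ne_of_ne (by decide : (0:Fin 3) ≠ 1) hj'0.symm, hτ0]
  · simp [Equiv.trans_apply, Equiv.swap_apply_left, hj']

lemma mem_both_balls_eq_midpoint (x A B : R3) (r : ℝ) (hr : r = ‖A - B‖/2)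
    (h1 : ‖x - A‖ ≤ r) (h2 : ‖x - B‖ ≤ r) : x = midpoint ℝ A B := by
  have hpar := parallelogram_law_with_norm ℝ (x - A) (x - B)
  have h3 : (x - A) - (x - B) = B - A := by abel
  have h4 : ‖B - A‖ = ‖A - B‖ := by rw [← neg_sub, norm_neg]
  rw [h3, h4] at hpar
  have h5 : ‖(x - A) + (x - B)‖ = 0 := by
    nlinarith [norm_nonneg ((x-A)+(x-B)), norm_nonneg (x-A), norm_nonneg (x-B), norm_nonneg (A-B)]
  have h6 : (x - A) + (x - B) = 0 := norm_eq_zero.mp h5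
  have h7 : x = (2⁻¹:ℝ) • (A + B) := by
    have h8 : (2:ℝ) • x = A + B := by
      rw [two_smul]
      linear_combination (norm := module) h6
    rw [← h8, smul_smul]
    norm_num
  rw [midpoint_eq_smul_add, invOf_eq_inv]
  exact h7

lemma pigeon3 (c0 c1 c2 a0 a1 a2 b0 b1 b2 : Prop)
    (h0 : c0 ∨ a0 ∨ b0) (h1 : c1 ∨ a1 ∨ b1) (h2 : c2 ∨ a2 ∨ b2) :
    ((c0 ∨ c1) ∨ c2) ∨
      (((a0 ∧ a1 ∨ a0 ∧ a2) ∨ a1 ∧ a2) ∨ ((b0 ∧ b1 ∨ b0 ∧ b2) ∨ b1 ∧ b2)) := by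
  tauto

/-- The smooth anticorrelated pair density
`p₂(x,y) = ½(φ(x−A)φ(y−B) + φ(x−B)φ(y−A))`, with `φ ≥ 0`, `∫ φ = 1`, and `φ(z) = 0`
whenever `|z| > |A−B|/2`, is not 3-density representable. -/
theorem smooth_anticorrelated_not_three_rep (A B : R3) (hAB : A ≠ B)
    (φ : R3 → ℝ) (hφ_meas : Measurable φ) (hφ_nonneg : ∀ z, 0 ≤ φ z)
    (hφ_int : ∫ z, φ z = 1) (hφ_supp : ∀ z : R3, ‖A - B‖ / 2 < ‖z‖ → φ z = 0) :
    ¬ NDensityRep 3 (by omega)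
        (volume.withDensity fun z : R3 × R3 =>
          ENNReal.ofReal ((φ (z.1 - A) * φ (z.2 - B) + φ (z.1 - B) * φ (z.2 - A)) / 2)) := by
  rintro ⟨p, hp, hsym, hmarg⟩
  set f : R3 × R3 → ℝ≥0∞ := fun z : R3 × R3 =>
      ENNReal.ofReal ((φ (z.1 - A) * φ (z.2 - B) + φ (z.1 - B) * φ (z.2 - A)) / 2) with hf_def
  set r : ℝ := ‖A - B‖ / 2 with hr
  set SA : Set R3 := Metric.closedBall A r with hSA
  set SB : Set R3 := Metric.closedBall B r with hSB
  set m : R3 := midpoint ℝ A B with hm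
  -- support of translated φ
  have hsupp : ∀ x y : R3, φ (x - y) ≠ 0 → x ∈ Metric.closedBall y r := by
    intro x y hxy
    rw [Metric.mem_closedBall, dist_eq_norm]
    by_contra hc
    exact hxy (hφ_supp (x - y) (lt_of_not_ge hc))
  -- measurability of f
  have hf : Measurable f := by
    apply Measurable.ennreal_ofReal
    exact (((hφ_meas.comp (measurable_fst.sub measurable_const)).mul
      (hφ_meas.comp (measurable_snd.sub measurable_const))).add
      ((hφ_meas.comp (measurable_fst.sub measurable_const)).mul
      (hφ_meas.comp (measurable_snd.sub measurable_const)))).div_const 2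
  -- null set N
  set N : Set (R3 × R3) := (({m} : Set R3) ×ˢ (Set.univ : Set R3)) ∪
      ((Set.univ : Set R3) ×ˢ ({m} : Set R3)) with hN_def
  have hNnull : volume N = 0 := by
    apply measure_union_null
    · rw [Measure.volume_eq_prod _ _, Measure.prod_prod, measure_singleton, zero_mul]
    · rw [Measure.volume_eq_prod _ _, Measure.prod_prod, measure_singleton, mul_zero]
  have hSAm : MeasurableSet SA := measurableSet_closedBall
  have hSBm : MeasurableSet SB := measurableSet_closedBall
  have hCm : MeasurableSet ((SA ∪ SB)ᶜ) := (hSAm.union hSBm).compl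
  -- positivity decomposition: if f z ≠ 0 then one of products nonzero
  have hfpos : ∀ z : R3 × R3, f z ≠ 0 →
      (φ (z.1 - A) ≠ 0 ∧ φ (z.2 - B) ≠ 0) ∨ (φ (z.1 - B) ≠ 0 ∧ φ (z.2 - A) ≠ 0) := by
    intro z hz
    rw [hf_def] at hz
    simp only [ne_eq, ENNReal.ofReal_eq_zero, not_le] at hz
    by_contra hc
    push_neg at hc
    obtain ⟨hc1, hc2⟩ := hc
    have e1 : φ (z.1 - A) * φ (z.2 - B) = 0 := by
      rcases Classical.em (φ (z.1 - A) = 0) with h | h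
      · rw [h, zero_mul]
      · rw [hc1 h, mul_zero]
    have e2 : φ (z.1 - B) * φ (z.2 - A) = 0 := by
      rcases Classical.em (φ (z.1 - B) = 0) with h | h
      · rw [h, zero_mul]
      · rw [hc2 h, mul_zero]
    rw [e1, e2] at hz
    norm_num at hz
  -- key vanishing facts for p₂ = volume.withDensity f
  have hAA : (volume.withDensity f) (SA ×ˢ SA) = 0 := by
    rw [withDensity_apply _ (hSAm.prod hSAm), lintegral_eq_zero_iff hf,
      Filter.EventuallyEq, ae_restrict_iff' (hSAm.prod hSAm)]
    rw [ae_iff]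
    apply measure_mono_null _ hNnull
    intro z hz
    simp only [Set.mem_setOf_eq, not_forall] at hz
    obtain ⟨hzs, hzf⟩ := hz
    obtain ⟨hz1, hz2⟩ := hzs
    rcases hfpos z hzf with ⟨_, h2⟩ | ⟨h1, _⟩
    · -- z.2 ∈ SB and z.2 ∈ SA ⇒ z.2 = m
      have hz2B := hsupp z.2 B h2
      have : z.2 = m := mem_both_balls_eq_midpoint z.2 A B r hr
        (by rw [← dist_eq_norm]; exact hz2) (by rw [← dist_eq_norm]; exact hz2B)
      right
      exact ⟨Set.mem_univ _, this⟩
    · have hz1B := hsupp z.1 B h1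
      have : z.1 = m := mem_both_balls_eq_midpoint z.1 A B r hr
        (by rw [← dist_eq_norm]; exact hz1) (by rw [← dist_eq_norm]; exact hz1B)
      left
      exact ⟨this, Set.mem_univ _⟩
  have hBB : (volume.withDensity f) (SB ×ˢ SB) = 0 := by
    rw [withDensity_apply _ (hSBm.prod hSBm), lintegral_eq_zero_iff hf,
      Filter.EventuallyEq, ae_restrict_iff' (hSBm.prod hSBm)]
    rw [ae_iff]
    apply measure_mono_null _ hNnull
    intro z hz
    simp only [Set.mem_setOf_eq, not_forall] at hz
    obtain ⟨hzs, hzf⟩ := hz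
    obtain ⟨hz1, hz2⟩ := hzs
    rcases hfpos z hzf with ⟨h1, _⟩ | ⟨_, h2⟩
    · have hz1A := hsupp z.1 A h1
      have : z.1 = m := mem_both_balls_eq_midpoint z.1 A B r hr
        (by rw [← dist_eq_norm]; exact hz1A) (by rw [← dist_eq_norm]; exact hz1)
      left
      exact ⟨this, Set.mem_univ _⟩
    · have hz2A := hsupp z.2 A h2
      have : z.2 = m := mem_both_balls_eq_midpoint z.2 A B r hr
        (by rw [← dist_eq_norm]; exact hz2A) (by rw [← dist_eq_norm]; exact hz2)
      right
      exact ⟨Set.mem_univ _, this⟩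
  have hCC : (volume.withDensity f) ((SA ∪ SB)ᶜ ×ˢ (Set.univ : Set R3)) = 0 := by
    rw [withDensity_apply _ (hCm.prod MeasurableSet.univ), lintegral_eq_zero_iff hf,
      Filter.EventuallyEq, ae_restrict_iff' (hCm.prod MeasurableSet.univ)]
    apply Filter.Eventually.of_forall
    intro z hz
    obtain ⟨hz1, _⟩ := hz
    rw [Set.mem_compl_iff, Set.mem_union] at hz1
    push_neg at hz1
    have e1 : φ (z.1 - A) = 0 := by
      by_contra hc; exact hz1.1 (hsupp z.1 A hc)
    have e2 : φ (z.1 - B) = 0 := by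
      by_contra hc; exact hz1.2 (hsupp z.1 B hc)
    simp [hf_def, e1, e2]
  -- pair marginals for arbitrary i ≠ j
  have hm2 : Measurable (fun x : Fin 3 → R3 => (x 0, x 1)) :=
    (measurable_pi_apply 0).prodMk (measurable_pi_apply 1)
  have hpair : ∀ i j : Fin 3, i ≠ j →
      p.map (fun x => (x i, x j)) = volume.withDensity f := by
    intro i j hij
    obtain ⟨σ, hσ0, hσ1⟩ := exists_perm_01 i j hij
    have hm1 : Measurable (fun x : Fin 3 → R3 => x ∘ σ) :=
      measurable_pi_lambda _ (fun k => measurable_pi_apply _)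
    have step1 : p.map (fun x => (x i, x j)) =
        (p.map (fun x : Fin 3 → R3 => x ∘ σ)).map (fun x : Fin 3 → R3 => (x 0, x 1)) := by
      rw [Measure.map_map hm2 hm1]
      congr 1
      funext x
      simp [Function.comp, hσ0, hσ1]
    rw [step1, hsym σ]
    exact hmarg
  -- the measurable pair projections
  have hproj : ∀ i j : Fin 3, Measurable (fun x : Fin 3 → R3 => (x i, x j)) :=
    fun i j => (measurable_pi_apply i).prodMk (measurable_pi_apply j)
  -- p of preimages of null sets of p₂ is null
  have hkey : ∀ (i j : Fin 3), i ≠ j → ∀ s : Set (R3 × R3), MeasurableSet s →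
      (volume.withDensity f) s = 0 → p ((fun x : Fin 3 → R3 => (x i, x j)) ⁻¹' s) = 0 := by
    intro i j hij s hs hs0
    have := hpair i j hij
    rw [← Measure.map_apply (hproj i j) hs, this, hs0]
  -- the nine bad sets
  have hG : ∀ (i j : Fin 3), i ≠ j → p {x : Fin 3 → R3 | x i ∈ (SA ∪ SB)ᶜ} = 0 := by
    intro i j hij
    have he : {x : Fin 3 → R3 | x i ∈ (SA ∪ SB)ᶜ} =
        (fun x : Fin 3 → R3 => (x i, x j)) ⁻¹' ((SA ∪ SB)ᶜ ×ˢ (Set.univ : Set R3)) := by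
      ext x; simp
    rw [he]
    exact hkey i j hij _ (hCm.prod MeasurableSet.univ) hCC
  have hHA : ∀ (i j : Fin 3), i ≠ j → p {x : Fin 3 → R3 | x i ∈ SA ∧ x j ∈ SA} = 0 := by
    intro i j hij
    have he : {x : Fin 3 → R3 | x i ∈ SA ∧ x j ∈ SA} =
        (fun x : Fin 3 → R3 => (x i, x j)) ⁻¹' (SA ×ˢ SA) := by
      ext x; simp [Set.mem_prod]
    rw [he]
    exact hkey i j hij _ (hSAm.prod hSAm) hAA
  have hHB : ∀ (i j : Fin 3), i ≠ j → p {x : Fin 3 → R3 | x i ∈ SB ∧ x j ∈ SB} = 0 := by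
    intro i j hij
    have he : {x : Fin 3 → R3 | x i ∈ SB ∧ x j ∈ SB} =
        (fun x : Fin 3 → R3 => (x i, x j)) ⁻¹' (SB ×ˢ SB) := by
      ext x; simp [Set.mem_prod]
    rw [he]
    exact hkey i j hij _ (hSBm.prod hSBm) hBB
  -- the cover
  have hcover : (Set.univ : Set (Fin 3 → R3)) ⊆
      ({x : Fin 3 → R3 | x 0 ∈ (SA ∪ SB)ᶜ} ∪ {x : Fin 3 → R3 | x 1 ∈ (SA ∪ SB)ᶜ} ∪
       {x : Fin 3 → R3 | x 2 ∈ (SA ∪ SB)ᶜ}) ∪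
      (({x : Fin 3 → R3 | x 0 ∈ SA ∧ x 1 ∈ SA} ∪ {x : Fin 3 → R3 | x 0 ∈ SA ∧ x 2 ∈ SA} ∪
        {x : Fin 3 → R3 | x 1 ∈ SA ∧ x 2 ∈ SA}) ∪
       ({x : Fin 3 → R3 | x 0 ∈ SB ∧ x 1 ∈ SB} ∪ {x : Fin 3 → R3 | x 0 ∈ SB ∧ x 2 ∈ SB} ∪
        {x : Fin 3 → R3 | x 1 ∈ SB ∧ x 2 ∈ SB})) := by
    intro x _
    simp only [Set.mem_union, Set.mem_setOf_eq]
    have hh : ∀ i : Fin 3, x i ∈ (SA ∪ SB)ᶜ ∨ (x i ∈ SA ∨ x i ∈ SB) := by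
      intro i
      by_cases h : x i ∈ SA ∪ SB
      · right; exact h
      · left; exact h
    exact pigeon3 _ _ _ _ _ _ _ _ _ (hh 0) (hh 1) (hh 2)
  -- conclude
  have hzero : p (Set.univ : Set (Fin 3 → R3)) = 0 := by
    apply measure_mono_null hcover
    refine measure_union_null (measure_union_null (measure_union_null ?_ ?_) ?_)
      (measure_union_null (measure_union_null (measure_union_null ?_ ?_) ?_)
        (measure_union_null (measure_union_null ?_ ?_) ?_))
    · exact hG 0 1 (by decide)
    · exact hG 1 0 (by decide)
    · exact hG 2 0 (by decide)
    · exact hHA 0 1 (by decide)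
    · exact hHA 0 2 (by decide)
    · exact hHA 1 2 (by decide)
    · exact hHB 0 1 (by decide)
    · exact hHB 0 2 (by decide)
    · exact hHB 1 2 (by decide)
  have hone : p (Set.univ : Set (Fin 3 → R3)) = 1 := hp.measure_univ
  rw [hzero] at hone
  exact zero_ne_one hone

end
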